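/- arXiv:hep-th/0308038 — 2 statements merged into one kernel-verified Lean document; each statement's English description precedes it below -/
import Mathlib

section
/- (Fine Tuning.) Let p ∈ ℂ[X] be a polynomial of degree n ≥ 1 all of whose n roots ξ₁, …, ξₙ are distinct (equivalently, all roots are simple). Then for every ε > 0 there exists δ > 0 such that: for every polynomial q ∈ ℂ[X] of degree at most n whose coefficient vector has Euclidean norm less than δ, the polynomial p + q has degree exactly n, all roots of p + q lie in the union ⋃ᵢ B(ξᵢ, ε) of the open discs of radius ε about the ξᵢ, and (if ε is small enough that these discs are pairwise disjoint) each disc B(ξᵢ, ε) contains exactly one root of p + q counted with multiplicity. -/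
open Polynomial
open scoped Classical

/-!
Over `ℂ`, `‖r(z)‖ = ‖lead r‖ · ∏ ‖z - ξ‖` over the roots `ξ` of `r`, so `‖r(z)‖ < ‖lead r‖ cⁿ`
forces a root of `r` within `c` of `z`. Small coefficients give `‖q(z)‖ ≤ (n+1) δ (1 + ‖z‖)ⁿ`.
If `‖ξ‖ ≤ R` for the roots of `p` and `z` is `ε`-far from all of them, then
`‖z - ξ‖ ≥ κ (1 + ‖z‖)` with `κ = ε / (1 + R + ε)`, so `‖p(z)‖ ≥ ‖lead p‖ κⁿ (1 + ‖z‖)ⁿ` grows as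
fast as the bound on `‖q(z)‖`; hence for small `δ` every root of `p + q` is `ε`-close to a root
of `p`, with no a priori bound on the roots of `p + q`. Conversely, at a root `ξ` of `p`,
`(p + q)(ξ) = q(ξ)` is small, so each disc `B(ξ, ε)` contains a root of `p + q`; when the `n`
discs are disjoint, the `n` roots of `p + q` are then distributed one per disc.
-/

namespace Multiset

variable {α ι : Type*} {S : Finset ι} {B : ι → Set α} [∀ i, DecidablePred (· ∈ B i)]

theorem sum_card_filter_le_card (m : Multiset α) (hB : (S : Set ι).PairwiseDisjoint B) :
    ∑ i ∈ S, card (m.filter (· ∈ B i)) ≤ card m := by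
  induction m using Multiset.induction_on with
  | empty => simp
  | cons a m ih =>
    have hle : (S.filter (a ∈ B ·)).card ≤ 1 :=
      Finset.card_le_one.2 fun i hi j hj => by
        simp only [Finset.mem_filter] at hi hj
        by_contra hij
        exact Set.disjoint_left.1 (hB hi.1 hj.1 hij) hi.2 hj.2
    simp only [filter_cons, card_add, Finset.sum_add_distrib, card_cons, apply_ite card,
      card_singleton, card_zero, ← Finset.card_filter]
    omega

theorem card_filter_eq_one_of_pairwiseDisjoint (m : Multiset α)
    (hB : (S : Set ι).PairwiseDisjoint B) (hcard : card m ≤ S.card)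
    (hmem : ∀ i ∈ S, ∃ a ∈ m, a ∈ B i) {i : ι} (hi : i ∈ S) :
    card (m.filter (· ∈ B i)) = 1 := by
  have hpos : ∀ j ∈ S, 1 ≤ card (m.filter (· ∈ B j)) := fun j hj =>
    card_pos_iff_exists_mem.2 <| (hmem j hj).imp fun a ha => mem_filter.2 ha
  refine le_antisymm (not_lt.1 fun hlt => ?_) (hpos i hi)
  have hsum := Finset.sum_lt_sum hpos ⟨i, hi, hlt⟩
  rw [Finset.sum_const, smul_eq_mul, mul_one] at hsum
  exact (hsum.trans_le (sum_card_filter_le_card m hB)).not_ge hcard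

end Multiset

theorem mul_one_add_norm_le_of_le_norm_sub {E : Type*} [SeminormedAddGroup E] {z ξ : E}
    {R ε : ℝ} (hξ : ‖ξ‖ ≤ R) (hε : 0 ≤ ε) (h : ε ≤ ‖z - ξ‖) :
    ε * (1 + ‖z‖) ≤ (1 + R + ε) * ‖z - ξ‖ := by
  nlinarith [norm_le_norm_sub_add z ξ, norm_nonneg ξ]

namespace Polynomial

section SeminormedRing

variable {R : Type*} [SeminormedRing R] {p q : R[X]}

theorem norm_coeff_le_sqrt_sum_sq {n : ℕ} (hq : q.degree ≤ n) (i : ℕ) :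
    ‖q.coeff i‖ ≤ √(∑ j ∈ Finset.range (n + 1), ‖q.coeff j‖ ^ 2) := by
  rcases le_or_gt i n with hi | hi
  · refine Real.le_sqrt_of_sq_le ?_
    exact Finset.single_le_sum (f := fun j => ‖q.coeff j‖ ^ 2) (fun _ _ => by positivity)
      (Finset.mem_range.2 (Nat.lt_succ_of_le hi))
  · rw [coeff_eq_zero_of_degree_lt (hq.trans_lt (by exact_mod_cast hi)), norm_zero]
    exact Real.sqrt_nonneg _

theorem norm_eval_le_of_norm_coeff_le [NormOneClass R] {n : ℕ} (hq : q.natDegree ≤ n) {δ : ℝ}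
    (hδ : ∀ i, ‖q.coeff i‖ ≤ δ) (z : R) :
    ‖q.eval z‖ ≤ (n + 1) * δ * (1 + ‖z‖) ^ n := by
  have hδ0 : 0 ≤ δ := (norm_nonneg _).trans (hδ 0)
  rw [eval_eq_sum_range' (Nat.lt_succ_of_le hq)]
  calc ‖∑ i ∈ Finset.range (n + 1), q.coeff i * z ^ i‖
      ≤ ∑ i ∈ Finset.range (n + 1), ‖q.coeff i‖ * ‖z‖ ^ i :=
        (norm_sum_le _ _).trans <| Finset.sum_le_sum fun i _ =>
          (norm_mul_le _ _).trans <| mul_le_mul_of_nonneg_left (norm_pow_le z i) (norm_nonneg _)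
    _ ≤ ∑ _i ∈ Finset.range (n + 1), δ * (1 + ‖z‖) ^ n := by
        refine Finset.sum_le_sum fun i hi => mul_le_mul (hδ i) ?_ (by positivity) hδ0
        calc ‖z‖ ^ i ≤ (1 + ‖z‖) ^ i := pow_le_pow_left₀ (norm_nonneg z) (by linarith) i
          _ ≤ (1 + ‖z‖) ^ n := pow_le_pow_right₀ (by linarith [norm_nonneg z])
              (Nat.lt_succ_iff.1 (Finset.mem_range.1 hi))
    _ = (n + 1) * δ * (1 + ‖z‖) ^ n := by simp [mul_assoc]

theorem natDegree_add_eq_left_of_norm_coeff_lt (hq : q.natDegree ≤ p.natDegree)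
    (h : ‖q.coeff p.natDegree‖ < ‖p.leadingCoeff‖) : (p + q).natDegree = p.natDegree := by
  refine natDegree_eq_of_le_of_coeff_ne_zero (natDegree_add_le_of_degree_le le_rfl hq) ?_
  rw [coeff_add, coeff_natDegree]
  intro h0
  rw [eq_neg_of_add_eq_zero_left h0, norm_neg] at h
  exact lt_irrefl _ h

theorem norm_leadingCoeff_lt_two_mul_norm_leadingCoeff_add (hq : q.natDegree ≤ p.natDegree)
    (h : 2 * ‖q.coeff p.natDegree‖ < ‖p.leadingCoeff‖) :
    ‖p.leadingCoeff‖ < 2 * ‖(p + q).leadingCoeff‖ := by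
  have hlt : ‖q.coeff p.natDegree‖ < ‖p.leadingCoeff‖ := by
    linarith [norm_nonneg (q.coeff p.natDegree)]
  change _ < 2 * ‖(p + q).coeff (p + q).natDegree‖
  rw [natDegree_add_eq_left_of_norm_coeff_lt hq hlt, coeff_add, coeff_natDegree]
  have := norm_sub_norm_le p.leadingCoeff (-q.coeff p.natDegree)
  rw [norm_neg, sub_neg_eq_add] at this
  linarith

end SeminormedRing

section IsAlgClosed

variable {K : Type*} [NormedField K] [IsAlgClosed K]

theorem norm_eval_eq_norm_leadingCoeff_mul_prod_roots (r : K[X]) (z : K) :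
    ‖r.eval z‖ = ‖r.leadingCoeff‖ * (r.roots.map fun ξ => ‖z - ξ‖).prod := by
  rw [(IsAlgClosed.splits r).eval_eq_prod_roots, norm_mul,
    ← normHom_apply (_ : Multiset K).prod, map_multiset_prod, Multiset.map_map]
  rfl

theorem exists_mem_roots_norm_sub_lt_of_norm_eval_lt (r : K[X]) {z : K} {c : ℝ} (hc : 0 ≤ c)
    (h : ‖r.eval z‖ < ‖r.leadingCoeff‖ * c ^ r.natDegree) : ∃ ξ ∈ r.roots, ‖z - ξ‖ < c := by
  by_contra! hfar
  have hprod : c ^ r.natDegree ≤ (r.roots.map fun ξ => ‖z - ξ‖).prod := by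
    simpa [IsAlgClosed.card_roots_eq_natDegree] using
      Multiset.prod_map_le_prod_map₀ (fun _ => c) _ (fun _ _ => hc) hfar
  rw [norm_eval_eq_norm_leadingCoeff_mul_prod_roots] at h
  exact h.not_ge (mul_le_mul_of_nonneg_left hprod (norm_nonneg _))

variable {p q : K[X]} {R ε : ℝ}

theorem exists_mem_roots_norm_sub_lt_of_mem_roots_add (hp : p ≠ 0) (hR0 : 0 ≤ R)
    (hR : ∀ ξ ∈ p.roots, ‖ξ‖ ≤ R) (hε : 0 < ε)
    (hq : ∀ z, 2 * ‖q.eval z‖ ≤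
      ‖p.leadingCoeff‖ * (ε / (1 + R + ε)) ^ p.natDegree * (1 + ‖z‖) ^ p.natDegree)
    {z : K} (hz : z ∈ (p + q).roots) : ∃ ξ ∈ p.roots, ‖z - ξ‖ < ε := by
  have hpz : ‖p.eval z‖ = ‖q.eval z‖ := by
    rw [eq_neg_of_add_eq_zero_left ((eval_add ..).symm.trans (isRoot_of_mem_roots hz)), norm_neg]
  have hpos :
      0 < ‖p.leadingCoeff‖ * (ε / (1 + R + ε)) ^ p.natDegree * (1 + ‖z‖) ^ p.natDegree := by
    have := norm_pos_iff.2 (leadingCoeff_ne_zero.2 hp)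
    positivity
  obtain ⟨ξ, hξ, hzξ⟩ := exists_mem_roots_norm_sub_lt_of_norm_eval_lt p
    (c := ε / (1 + R + ε) * (1 + ‖z‖)) (by positivity)
    (by rw [mul_pow, ← mul_assoc, hpz]; linarith [hq z])
  refine ⟨ξ, hξ, lt_of_not_ge fun hle => hzξ.not_ge ?_⟩
  rw [div_mul_eq_mul_div, div_le_iff₀ (by positivity)]
  linarith [mul_one_add_norm_le_of_le_norm_sub (hR ξ hξ) hε.le hle]

theorem exists_mem_roots_add_norm_sub_lt_of_mem_roots (hR0 : 0 ≤ R)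
    (hR : ∀ ξ ∈ p.roots, ‖ξ‖ ≤ R) (hε : 0 < ε)
    (hq : ∀ z, 2 * ‖q.eval z‖ ≤
      ‖p.leadingCoeff‖ * (ε / (1 + R + ε)) ^ p.natDegree * (1 + ‖z‖) ^ p.natDegree)
    (hdeg : (p + q).natDegree = p.natDegree)
    (hlead : ‖p.leadingCoeff‖ < 2 * ‖(p + q).leadingCoeff‖)
    {ξ : K} (hξ : ξ ∈ p.roots) : ∃ z ∈ (p + q).roots, ‖ξ - z‖ < ε := by
  refine exists_mem_roots_norm_sub_lt_of_norm_eval_lt (p + q) hε.le ?_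
  have hκ : ε / (1 + R + ε) * (1 + ‖ξ‖) ≤ ε := by
    rw [div_mul_eq_mul_div, div_le_iff₀ (by positivity)]
    nlinarith [hR ξ hξ]
  rw [hdeg, eval_add, (isRoot_of_mem_roots hξ).eq_zero, zero_add]
  have hεn : 0 < ε ^ p.natDegree := by positivity
  suffices 2 * ‖q.eval ξ‖ < 2 * (‖(p + q).leadingCoeff‖ * ε ^ p.natDegree) by linarith
  calc 2 * ‖q.eval ξ‖
      ≤ ‖p.leadingCoeff‖ * (ε / (1 + R + ε) * (1 + ‖ξ‖)) ^ p.natDegree := by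
        rw [mul_pow, ← mul_assoc]; exact hq ξ
    _ ≤ ‖p.leadingCoeff‖ * ε ^ p.natDegree := by gcongr
    _ < 2 * (‖(p + q).leadingCoeff‖ * ε ^ p.natDegree) := by rw [← mul_assoc]; gcongr

theorem card_filter_roots_add_mem_ball_eq_one (hR0 : 0 ≤ R)
    (hR : ∀ ξ ∈ p.roots, ‖ξ‖ ≤ R) (hε : 0 < ε)
    (hq : ∀ z, 2 * ‖q.eval z‖ ≤
      ‖p.leadingCoeff‖ * (ε / (1 + R + ε)) ^ p.natDegree * (1 + ‖z‖) ^ p.natDegree)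
    (hdeg : (p + q).natDegree = p.natDegree)
    (hlead : ‖p.leadingCoeff‖ < 2 * ‖(p + q).leadingCoeff‖)
    (hsep : p.roots.toFinset.card = p.natDegree)
    (hdisj : (p.roots.toFinset : Set K).PairwiseDisjoint (Metric.ball · ε))
    {ξ : K} (hξ : ξ ∈ p.roots) :
    Multiset.card ((p + q).roots.filter fun z => z ∈ Metric.ball ξ ε) = 1 := by
  refine Multiset.card_filter_eq_one_of_pairwiseDisjoint _ hdisj ?_ ?_ (Multiset.mem_toFinset.2 hξ)
  · rw [IsAlgClosed.card_roots_eq_natDegree, hdeg, hsep]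
  · intro ξ hξ
    obtain ⟨z, hz, hξz⟩ := exists_mem_roots_add_norm_sub_lt_of_mem_roots hR0 hR hε hq hdeg
      hlead (Multiset.mem_toFinset.1 hξ)
    exact ⟨z, hz, by rwa [Metric.mem_ball, dist_eq_norm, norm_sub_rev]⟩

end IsAlgClosed

end Polynomial

/-- Fine Tuning: Let `p ∈ ℂ[X]` have degree `n ≥ 1` with `n` distinct
roots.  For every `ε > 0` there is `δ > 0` such that for every polynomial `q` of degree
at most `n` whose coefficient vector has Euclidean norm `< δ`, the polynomial `p + q`
has degree exactly `n`, all roots of `p + q` lie within `ε` of some root of `p`, and if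
the `ε`-discs about the roots of `p` are pairwise disjoint then each such disc contains
exactly one root of `p + q` counted with multiplicity. -/
theorem fine_tuning (n : ℕ) (hn : 1 ≤ n) (p : Polynomial ℂ)
    (hdeg : p.natDegree = n) (hdistinct : p.roots.toFinset.card = n) :
    ∀ ε > (0 : ℝ), ∃ δ > (0 : ℝ), ∀ q : Polynomial ℂ, q.degree ≤ (n : WithBot ℕ) →
      Real.sqrt (∑ i ∈ Finset.range (n + 1), ‖q.coeff i‖ ^ 2) < δ →
      (p + q).natDegree = n ∧
      (∀ z ∈ (p + q).roots, ∃ ξ ∈ p.roots, ‖z - ξ‖ < ε) ∧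
      ((∀ ξ ∈ p.roots, ∀ ξ' ∈ p.roots, ξ ≠ ξ' →
          Disjoint (Metric.ball ξ ε) (Metric.ball ξ' ε)) →
        ∀ ξ ∈ p.roots,
          Multiset.card
            ((p + q).roots.filter fun z => z ∈ Metric.ball ξ ε) = 1) := by
  subst hdeg
  intro ε hε
  have hp : p ≠ 0 := by rintro rfl; simp at hn
  obtain ⟨R, hR0, hR⟩ : ∃ R, 0 ≤ R ∧ ∀ ξ ∈ p.roots, ‖ξ‖ ≤ R :=
    ⟨∑ ξ ∈ p.roots.toFinset, ‖ξ‖, by positivity, fun ξ hξ =>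
      Finset.single_le_sum (f := (‖·‖)) (fun _ _ => norm_nonneg _) (Multiset.mem_toFinset.2 hξ)⟩
  set κ := ε / (1 + R + ε)
  have hA : 0 < ‖p.leadingCoeff‖ := norm_pos_iff.2 (leadingCoeff_ne_zero.2 hp)
  have hκ : κ ^ p.natDegree ≤ 1 :=
    pow_le_one₀ (by positivity) ((div_le_one (by positivity)).2 (by linarith))
  refine ⟨‖p.leadingCoeff‖ * κ ^ p.natDegree / (2 * (p.natDegree + 1)), by positivity,
    fun q hq hqsmall => ?_⟩
  have hqdeg := natDegree_le_of_degree_le hq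
  have hcoeff i : ‖q.coeff i‖ < ‖p.leadingCoeff‖ * κ ^ p.natDegree / (2 * (p.natDegree + 1)) :=
    (norm_coeff_le_sqrt_sum_sq hq i).trans_lt hqsmall
  have hqeval z :
      2 * ‖q.eval z‖ ≤ ‖p.leadingCoeff‖ * κ ^ p.natDegree * (1 + ‖z‖) ^ p.natDegree := by
    have := norm_eval_le_of_norm_coeff_le hqdeg (fun i => (hcoeff i).le) z
    field_simp at this
    linarith
  have hqn : 2 * ‖q.coeff p.natDegree‖ < ‖p.leadingCoeff‖ := by
    have := hcoeff p.natDegree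
    rw [lt_div_iff₀ (by positivity)] at this
    nlinarith
  have hdeg' := natDegree_add_eq_left_of_norm_coeff_lt hqdeg
    (by linarith [norm_nonneg (q.coeff p.natDegree)])
  have hlead := norm_leadingCoeff_lt_two_mul_norm_leadingCoeff_add hqdeg hqn
  refine ⟨hdeg', fun z hz => exists_mem_roots_norm_sub_lt_of_mem_roots_add hp hR0 hR hε hqeval hz,
    fun hdisj ξ hξ => card_filter_roots_add_mem_ball_eq_one hR0 hR hε hqeval hdeg' hlead hdistinct
      (fun ξ hξ ξ' hξ' => hdisj ξ (Multiset.mem_toFinset.1 hξ) ξ' (Multiset.mem_toFinset.1 hξ')) hξ⟩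
end

section
/- (Riesz projection is holomorphic.) Let X be a complex Banach space, U ⊆ ℂ open, and T : U → B(X) an analytic family of bounded operators. Let λ₀ ∈ ℂ and r > 0 be such that for every χ ∈ U and every ζ ∈ ℂ with |ζ − λ₀| = r, the operator T(χ) − ζ·I is invertible in B(X). Define the Riesz projection P(χ) := −(2πi)⁻¹ ∮_{|ζ−λ₀|=r} (T(χ) − ζ·I)⁻¹ dζ (contour integral over the positively oriented circle of radius r about λ₀). Then P(χ)² = P(χ) for every χ ∈ U, and the map χ ↦ P(χ) is analytic from U to B(X). -/
/-!
Write `P(χ) = (2πi)⁻¹ ∮ R(χ, z) dz` with the resolvent `R(χ, z) = (z - T χ)⁻¹`. Since the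
resolvent set is open, the circle of radius `r` can be shrunk to a concentric circle of radius
`r' < r` without changing the integral. By the resolvent identity
`R(z) R(w) = (z - w)⁻¹ (R(w) - R(z))` and Fubini, `∮_r ∮_{r'} R(z) R(w) = 2πi ∮_{r'} R(w)`,
because `∮ (z - w)⁻¹` over one circle is `2πi` or `0` according as the other variable lies
inside or outside it; hence `P² = P`.

`R(χ, z)` is jointly continuous and holomorphic in `χ`. Writing it by the Cauchy formula on a
small disc around `χ₀` and exchanging the two contour integrals exhibits `P` near `χ₀` as a
Cauchy integral, which is given by a power series.
-/

open MeasureTheory intervalIntegral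

/-- The Riesz projection `P(χ) = −(2πi)⁻¹ ∮_{|ζ−lam₀|=r} (T(χ) − ζ·I)⁻¹ dζ`, the contour
integral being over the positively oriented circle of radius `r` about `lam₀`. -/
noncomputable def rieszProjection {X : Type*} [NormedAddCommGroup X] [NormedSpace ℂ X]
    (T : ℂ → X →L[ℂ] X) (lam₀ : ℂ) (r : ℝ) (χ : ℂ) : X →L[ℂ] X :=
  (-(2 * (Real.pi : ℂ) * Complex.I)⁻¹) •
    ∫ θ in (0:ℝ)..(2 * Real.pi),
      (Complex.I * (r : ℂ) * Complex.exp ((θ : ℂ) * Complex.I)) •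
        Ring.inverse (T χ - (lam₀ + (r : ℂ) * Complex.exp ((θ : ℂ) * Complex.I)) • 1)

open Metric Complex Function Topology Real spectrum

theorem Ring.inverse_neg {R : Type*} [Ring R] (x : R) :
    Ring.inverse (-x) = -Ring.inverse x := by
  by_cases hx : IsUnit x
  · obtain ⟨u, rfl⟩ := hx
    rw [← Units.val_neg, Ring.inverse_unit, Ring.inverse_unit, inv_neg, Units.val_neg]
  · rw [Ring.inverse_non_unit _ hx, Ring.inverse_non_unit _ (mt (IsUnit.neg_iff x).1 hx), neg_zero]

namespace spectrum

variable {A : Type*} [Ring A] [Algebra ℂ A]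

theorem isUnit_sub_smul_one_iff {a : A} {z : ℂ} : IsUnit (a - z • 1) ↔ z ∈ resolventSet ℂ a := by
  rw [mem_resolventSet_iff, Algebra.algebraMap_eq_smul_one, ← IsUnit.neg_iff, neg_sub]

theorem resolvent_sub_resolvent_eq_smul_mul {a : A} {z w : ℂ} (hz : z ∈ resolventSet ℂ a)
    (hw : w ∈ resolventSet ℂ a) :
    resolvent a z - resolvent a w = (w - z) • (resolvent a z * resolvent a w) := by
  calc resolvent a z - resolvent a w
      = resolvent a z * ((algebraMap ℂ A w - a) * resolvent a w)
        - (resolvent a z * (algebraMap ℂ A z - a)) * resolvent a w := by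
        rw [resolvent, resolvent, Ring.mul_inverse_cancel _ hw, Ring.inverse_mul_cancel _ hz,
          mul_one, one_mul]
    _ = resolvent a z * algebraMap ℂ A (w - z) * resolvent a w := by
        rw [map_sub]; noncomm_ring
    _ = (w - z) • (resolvent a z * resolvent a w) := by
        rw [Algebra.smul_def, ← Algebra.commutes, mul_assoc]

end spectrum

section CircleIntegral

theorem ContinuousOn.continuous_uncurry_circleMap {E : Type*} [TopologicalSpace E]
    {G : ℂ → ℂ → E} {c₁ c₂ : ℂ} {R₁ R₂ : ℝ}
    (hR₁ : 0 ≤ R₁) (hR₂ : 0 ≤ R₂) (hG : ContinuousOn (uncurry G) (sphere c₁ R₁ ×ˢ sphere c₂ R₂)) :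
    Continuous fun p : ℝ × ℝ => G (circleMap c₁ R₁ p.1) (circleMap c₂ R₂ p.2) :=
  hG.comp_continuous ((continuous_circleMap c₁ R₁).prodMap (continuous_circleMap c₂ R₂))
    fun p => ⟨circleMap_mem_sphere c₁ hR₁ p.1, circleMap_mem_sphere c₂ hR₂ p.2⟩

variable {E : Type*} [NormedAddCommGroup E] [NormedSpace ℂ E]

theorem circleIntegrable_circleIntegral {G : ℂ → ℂ → E} {c₁ c₂ : ℂ} {R₁ R₂ : ℝ}
    (hR₁ : 0 ≤ R₁) (hR₂ : 0 ≤ R₂) (hG : ContinuousOn (uncurry G) (sphere c₁ R₁ ×ˢ sphere c₂ R₂)) :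
    CircleIntegrable (fun w => ∮ z in C(c₂, R₂), G w z) c₁ R₁ := by
  refine Continuous.intervalIntegrable ?_ _ _
  simp only [circleIntegral, deriv_circleMap]
  exact intervalIntegral.continuous_parametric_intervalIntegral_of_continuous'
    ((((continuous_circleMap 0 R₂).comp continuous_snd).mul continuous_const).smul
      (hG.continuous_uncurry_circleMap hR₁ hR₂)) _ _

theorem circleIntegral_comm {G : ℂ → ℂ → E} {c₁ c₂ : ℂ} {R₁ R₂ : ℝ}
    (hR₁ : 0 ≤ R₁) (hR₂ : 0 ≤ R₂) (hG : ContinuousOn (uncurry G) (sphere c₁ R₁ ×ˢ sphere c₂ R₂)) :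
    (∮ z in C(c₁, R₁), ∮ w in C(c₂, R₂), G z w) = ∮ w in C(c₂, R₂), ∮ z in C(c₁, R₁), G z w := by
  have hcont : Continuous fun p : ℝ × ℝ => (circleMap 0 R₁ p.1 * I) •
      (circleMap 0 R₂ p.2 * I) • G (circleMap c₁ R₁ p.1) (circleMap c₂ R₂ p.2) :=
    (((continuous_circleMap 0 R₁).comp continuous_fst).mul continuous_const).smul
      ((((continuous_circleMap 0 R₂).comp continuous_snd).mul continuous_const).smul
        (hG.continuous_uncurry_circleMap hR₁ hR₂))
  simp only [circleIntegral, ← intervalIntegral.integral_smul, deriv_circleMap]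
  rw [intervalIntegral_intervalIntegral_swap]
  · simp only [smul_comm (circleMap 0 R₁ _ * I)]
  · exact (hcont.continuousOn.integrableOn_compact (isCompact_uIcc.prod isCompact_uIcc)).mono_set
      (Set.prod_mono Set.uIoc_subset_uIcc Set.uIoc_subset_uIcc)

theorem analyticOnNhd_circleIntegral [CompleteSpace E] {U : Set ℂ} (hU : IsOpen U) {F : ℂ → ℂ → E}
    {c : ℂ} {R : ℝ} (hR : 0 ≤ R) (hF : ContinuousOn (uncurry F) (U ×ˢ sphere c R))
    (hFd : ∀ z ∈ sphere c R, DifferentiableOn ℂ (F · z) U) :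
    AnalyticOnNhd ℂ (fun χ => ∮ z in C(c, R), F χ z) U := by
  intro χ₀ hχ₀
  obtain ⟨ρ, hρ, hball⟩ := nhds_basis_closedBall.mem_iff.1 (hU.mem_nhds hχ₀)
  lift ρ to NNReal using hρ.le
  have hFs : ContinuousOn (uncurry F) (sphere χ₀ ρ ×ˢ sphere c R) :=
    hF.mono (Set.prod_mono (sphere_subset_closedBall.trans hball) le_rfl)
  refine ((hasFPowerSeriesOn_cauchy_integral (circleIntegrable_circleIntegral ρ.2 hR hFs)
    hρ).analyticAt).congr ?_
  filter_upwards [ball_mem_nhds χ₀ hρ] with χ hχ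
  have hcauchy : ∀ z ∈ sphere c R,
      F χ z = (2 * π * I : ℂ)⁻¹ • ∮ w in C(χ₀, ρ), (w - χ)⁻¹ • F w z := fun z hz => by
    rw [((hFd z hz).mono hball).circleIntegral_sub_inv_smul hχ, inv_smul_smul₀ two_pi_I_ne_zero]
  have hswap : ContinuousOn (uncurry fun z w => (w - χ)⁻¹ • F w z)
      (sphere c R ×ˢ sphere χ₀ ρ) := by
    refine ContinuousOn.smul ?_ (hFs.comp continuous_swap.continuousOn fun p hp => ⟨hp.2, hp.1⟩)
    refine (continuous_snd.sub continuous_const).continuousOn.inv₀ fun p hp => sub_ne_zero.2 ?_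
    rintro rfl
    exact (mem_ball.1 hχ).ne (mem_sphere.1 hp.2)
  calc (2 * π * I : ℂ)⁻¹ • ∮ w in C(χ₀, ρ), (w - χ)⁻¹ • ∮ z in C(c, R), F w z
      = (2 * π * I : ℂ)⁻¹ • ∮ w in C(χ₀, ρ), ∮ z in C(c, R), (w - χ)⁻¹ • F w z := by
        simp only [← circleIntegral.integral_smul]
    _ = (2 * π * I : ℂ)⁻¹ • ∮ z in C(c, R), ∮ w in C(χ₀, ρ), (w - χ)⁻¹ • F w z := by
        exact congrArg _ (circleIntegral_comm hR ρ.2 hswap).symm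
    _ = ∮ z in C(c, R), F χ z := by
        rw [← circleIntegral.integral_smul]
        exact (circleIntegral.integral_congr hR hcauchy).symm

end CircleIntegral

theorem IsOpen.eventually_sphere_subset {W : Set ℂ} (hW : IsOpen W) {c : ℂ} {r : ℝ} (hr : 0 < r)
    (h : sphere c r ⊆ W) : ∀ᶠ ρ in 𝓝 r, sphere c ρ ⊆ W := by
  have hcont : Continuous fun p : ℝ × ℝ => circleMap c p.1 p.2 := by
    unfold circleMap; fun_prop
  have hθ : ∀ θ ∈ Set.Icc 0 (2 * π), ∀ᶠ p : ℝ × ℝ in 𝓝 (r, θ), circleMap c p.1 p.2 ∈ W :=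
    fun θ _ => hcont.continuousAt.preimage_mem_nhds
      (hW.mem_nhds (h (circleMap_mem_sphere c hr.le θ)))
  filter_upwards [isCompact_Icc.eventually_forall_of_forall_eventually
    (P := fun ρ θ => circleMap c ρ θ ∈ W) hθ, lt_mem_nhds hr] with ρ hρ hρ₀
  rw [← abs_of_pos hρ₀, ← image_circleMap_Ioc]
  rintro _ ⟨θ, hθ, rfl⟩
  exact hρ θ (Set.Ioc_subset_Icc_self hθ)

section BanachAlgebra

variable {A : Type*} [NormedRing A] [NormedAlgebra ℂ A] [CompleteSpace A]

theorem circleIntegral_mul_const {f : ℂ → A} {c : ℂ} {R : ℝ} (hf : CircleIntegrable f c R)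
    (b : A) : (∮ z in C(c, R), f z) * b = ∮ z in C(c, R), f z * b := by
  simpa [circleIntegral, smul_mul_assoc] using
    (((ContinuousLinearMap.mul ℂ A).flip b).intervalIntegral_comp_comm hf.out).symm

theorem circleIntegral_const_mul {f : ℂ → A} {c : ℂ} {R : ℝ} (hf : CircleIntegrable f c R)
    (b : A) : b * (∮ z in C(c, R), f z) = ∮ z in C(c, R), b * f z := by
  simpa [circleIntegral, mul_smul_comm] using
    ((ContinuousLinearMap.mul ℂ A b).intervalIntegral_comp_comm hf.out).symm

theorem continuousOn_resolvent (a : A) : ContinuousOn (resolvent a) (resolventSet ℂ a) :=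
  fun _ hz => (hasDerivAt_resolvent_const_left hz).continuousAt.continuousWithinAt

theorem resolvent_mul_circleIntegral_resolvent {a : A} {c z : ℂ} {r : ℝ} (hr : 0 ≤ r)
    (hz : z ∈ resolventSet ℂ a) (hzr : r < dist z c) (hs : sphere c r ⊆ resolventSet ℂ a) :
    resolvent a z * (∮ w in C(c, r), resolvent a w)
      = ∮ w in C(c, r), (z - w)⁻¹ • resolvent a w := by
  have hne : ∀ w ∈ closedBall c r, z - w ≠ 0 := fun w hw h => by
    rw [sub_eq_zero.1 h] at hzr
    exact hzr.not_ge (mem_closedBall.1 hw)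
  have hinv : ContinuousOn (fun w => (z - w)⁻¹) (sphere c r) :=
    (continuousOn_const.sub continuousOn_id).inv₀ fun w hw => hne w (sphere_subset_closedBall hw)
  have hmul : ∀ w ∈ sphere c r,
      resolvent a z * resolvent a w = (z - w)⁻¹ • resolvent a w - (z - w)⁻¹ • resolvent a z := by
    intro w hw
    rw [← smul_sub, ← neg_sub (resolvent a z), resolvent_sub_resolvent_eq_smul_mul hz (hs hw),
      ← neg_smul, neg_sub, smul_smul, inv_mul_cancel₀ (hne w (sphere_subset_closedBall hw)),
      one_smul]
  have hzero : (∮ w in C(c, r), (z - w)⁻¹) = 0 := by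
    refine DiffContOnCl.circleIntegral_eq_zero hr
      (DifferentiableOn.diffContOnCl_ball (fun w hw => ?_) le_rfl)
    exact ((differentiableAt_const z).sub differentiableAt_id).inv (hne w hw)
      |>.differentiableWithinAt
  have h₁ : CircleIntegrable (fun w => (z - w)⁻¹ • resolvent a w) c r :=
    (hinv.smul ((continuousOn_resolvent a).mono hs)).circleIntegrable hr
  have h₂ : CircleIntegrable (fun w => (z - w)⁻¹ • resolvent a z) c r :=
    (hinv.smul continuousOn_const).circleIntegrable hr
  rw [circleIntegral_const_mul (((continuousOn_resolvent a).mono hs).circleIntegrable hr),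
    circleIntegral.integral_congr hr hmul, circleIntegral.integral_sub h₁ h₂,
    circleIntegral.integral_smul_const, hzero, zero_smul, sub_zero]

theorem circleIntegral_resolvent_mul_circleIntegral_resolvent {a : A} {c : ℂ} {r r' : ℝ}
    (hr' : 0 ≤ r') (hr'r : r' < r) (hs : sphere c r ⊆ resolventSet ℂ a)
    (hs' : sphere c r' ⊆ resolventSet ℂ a) :
    (∮ z in C(c, r), resolvent a z) * (∮ w in C(c, r'), resolvent a w)
      = (2 * π * I : ℂ) • ∮ w in C(c, r'), resolvent a w := by
  have hr : 0 ≤ r := hr'.trans hr'r.le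
  have hcont : ContinuousOn (uncurry fun z w => (z - w)⁻¹ • resolvent a w)
      (sphere c r ×ˢ sphere c r') := by
    refine ContinuousOn.smul ?_ ((continuousOn_resolvent a).comp continuous_snd.continuousOn
      fun p hp => hs' hp.2)
    refine (continuous_fst.sub continuous_snd).continuousOn.inv₀ fun p hp h => hr'r.ne ?_
    rw [← mem_sphere.1 hp.1, ← mem_sphere.1 hp.2, sub_eq_zero.1 h]
  calc (∮ z in C(c, r), resolvent a z) * (∮ w in C(c, r'), resolvent a w)
      = ∮ z in C(c, r), ∮ w in C(c, r'), (z - w)⁻¹ • resolvent a w := by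
        rw [circleIntegral_mul_const (((continuousOn_resolvent a).mono hs).circleIntegrable hr)]
        refine circleIntegral.integral_congr hr fun z hz => ?_
        exact resolvent_mul_circleIntegral_resolvent hr' (hs hz)
          ((mem_sphere.1 hz).symm ▸ hr'r) hs'
    _ = ∮ w in C(c, r'), ∮ z in C(c, r), (z - w)⁻¹ • resolvent a w :=
        circleIntegral_comm hr hr' hcont
    _ = ∮ w in C(c, r'), (2 * π * I : ℂ) • resolvent a w := by
        refine circleIntegral.integral_congr hr' fun w hw => ?_
        rw [circleIntegral.integral_smul_const, circleIntegral.integral_sub_inv_of_mem_ball]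
        exact mem_ball.2 ((mem_sphere.1 hw).trans_lt hr'r)
    _ = (2 * π * I : ℂ) • ∮ w in C(c, r'), resolvent a w := circleIntegral.integral_smul _ _ _ _

theorem isIdempotentElem_circleIntegral_resolvent {a : A} {c : ℂ} {r : ℝ} (hr : 0 < r)
    (h : sphere c r ⊆ resolventSet ℂ a) :
    IsIdempotentElem ((2 * π * I : ℂ)⁻¹ • ∮ z in C(c, r), resolvent a z) := by
  obtain ⟨l, ⟨hl₀, hlr⟩, hl⟩ := exists_Ioc_subset_of_mem_nhds'
    ((isOpen_resolventSet a).eventually_sphere_subset hr h) hr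
  obtain ⟨r', hlr', hr'r⟩ := exists_between hlr
  have hr'₀ : 0 < r' := hl₀.trans_lt hlr'
  have hann : ∀ z, r' ≤ dist z c → dist z c ≤ r → z ∈ resolventSet ℂ a := fun z h₁ h₂ =>
    hl ⟨by linarith, h₂⟩ (mem_sphere.2 rfl)
  have hdeform : (∮ z in C(c, r), resolvent a z) = ∮ z in C(c, r'), resolvent a z := by
    refine circleIntegral_eq_of_differentiable_on_annulus_off_countable hr'₀ hr'r.le
      Set.countable_empty (fun z hz => ?_) fun z hz => ?_
    · exact (hasDerivAt_resolvent_const_left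
        (hann z (not_lt.1 hz.2) hz.1)).continuousAt.continuousWithinAt
    · exact (hasDerivAt_resolvent_const_left
        (hann z (not_le.1 hz.1.2).le (mem_ball.1 hz.1.1).le)).differentiableAt
  have hJJ := circleIntegral_resolvent_mul_circleIntegral_resolvent hr'₀.le hr'r h
    (hl ⟨by linarith, hr'r.le⟩)
  rw [IsIdempotentElem, smul_mul_smul_comm]
  nth_rw 2 [hdeform]
  rw [hJJ, smul_smul, mul_assoc, inv_mul_cancel₀ two_pi_I_ne_zero, mul_one, hdeform]

theorem ContinuousOn.uncurry_resolvent {T : ℂ → A} {U K : Set ℂ} (hT : ContinuousOn T U)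
    (hK : ∀ χ ∈ U, K ⊆ resolventSet ℂ (T χ)) :
    ContinuousOn (uncurry fun χ z => resolvent (T χ) z) (U ×ˢ K) := by
  intro p hp
  have hunit : IsUnit (algebraMap ℂ A p.2 - T p.1) := hK p.1 hp.1 hp.2
  have hsub : ContinuousOn (fun q : ℂ × ℂ => algebraMap ℂ A q.2 - T q.1) (U ×ˢ K) :=
    ((continuous_algebraMap ℂ A).comp continuous_snd).continuousOn.sub
      (hT.comp continuousOn_fst fun q hq => hq.1)
  have hinv : ContinuousAt Ring.inverse (algebraMap ℂ A p.2 - T p.1) :=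
    hunit.unit_spec ▸ NormedRing.inverse_continuousAt hunit.unit
  exact ContinuousAt.comp_continuousWithinAt (g := Ring.inverse) hinv (hsub p hp)

theorem DifferentiableOn.resolvent {T : ℂ → A} {U : Set ℂ} (hT : DifferentiableOn ℂ T U) {z : ℂ}
    (hz : ∀ χ ∈ U, z ∈ resolventSet ℂ (T χ)) :
    DifferentiableOn ℂ (fun χ => resolvent (T χ) z) U := fun χ hχ =>
  (hasFDerivAt_resolvent (hz χ hχ)).differentiableAt.comp_differentiableWithinAt χ (hT χ hχ)

end BanachAlgebra

theorem rieszProjection_eq_smul_circleIntegral_resolvent {X : Type*} [NormedAddCommGroup X]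
    [NormedSpace ℂ X] (T : ℂ → X →L[ℂ] X) (lam₀ : ℂ) (r : ℝ) (χ : ℂ) :
    rieszProjection T lam₀ r χ = (2 * π * I : ℂ)⁻¹ • ∮ z in C(lam₀, r), resolvent (T χ) z := by
  simp only [rieszProjection, circleIntegral, deriv_circleMap, circleMap, resolvent,
    Algebra.algebraMap_eq_smul_one, ← neg_sub (T χ), Ring.inverse_neg, smul_neg,
    intervalIntegral.integral_neg, neg_smul, zero_add]
  congr 2 with θ
  ring_nf

/-- Riesz projection is holomorphic: if `T : U → B(X)` is analytic and
`T(χ) − ζ·I` is invertible for all `χ ∈ U` and all `ζ` on the circle `|ζ − lam₀| = r`,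
then the Riesz projection `P(χ)` satisfies `P(χ)² = P(χ)` for all `χ ∈ U` and
`χ ↦ P(χ)` is analytic on `U`. -/
theorem rieszProjection_idempotent_and_analytic
    {X : Type*} [NormedAddCommGroup X] [NormedSpace ℂ X] [CompleteSpace X]
    (U : Set ℂ) (hU : IsOpen U) (T : ℂ → X →L[ℂ] X) (hT : AnalyticOnNhd ℂ T U)
    (lam₀ : ℂ) (r : ℝ) (hr : 0 < r)
    (hinv : ∀ χ ∈ U, ∀ ζ : ℂ, ‖ζ - lam₀‖ = r → IsUnit (T χ - ζ • 1)) :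
    (∀ χ ∈ U,
      rieszProjection T lam₀ r χ * rieszProjection T lam₀ r χ = rieszProjection T lam₀ r χ) ∧
    AnalyticOnNhd ℂ (rieszProjection T lam₀ r) U := by
  have hres : ∀ χ ∈ U, sphere lam₀ r ⊆ resolventSet ℂ (T χ) := fun χ hχ ζ hζ =>
    isUnit_sub_smul_one_iff.1 (hinv χ hχ ζ (mem_sphere_iff_norm.1 hζ))
  refine ⟨fun χ hχ => ?_, ?_⟩
  · rw [rieszProjection_eq_smul_circleIntegral_resolvent]
    exact isIdempotentElem_circleIntegral_resolvent hr (hres χ hχ)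
  · have hJ : AnalyticOnNhd ℂ (fun χ => ∮ z in C(lam₀, r), resolvent (T χ) z) U :=
      analyticOnNhd_circleIntegral hU hr.le (hT.continuousOn.uncurry_resolvent hres)
        fun z hz => hT.differentiableOn.resolvent fun χ hχ => hres χ hχ hz
    rw [funext (rieszProjection_eq_smul_circleIntegral_resolvent T lam₀ r)]
    exact hJ.const_smul (c := (2 * π * I : ℂ)⁻¹)
end
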